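/- arXiv:0801.1443 — 3 statements merged into one kernel-verified Lean document; each statement's English description precedes it below -/
import Mathlib

section
/- For any real number r ≥ 0 and any elements a, b of a real inner product space E, one has ⟨‖a‖^r • a - ‖b‖^r • b, a - b⟩ ≥ 2^(-r) * ‖a - b‖^(r+2). -/
/-!
Put `x = ‖a‖`, `y = ‖b‖`, `t = ⟪a, b⟫`. Since `‖a - b‖ ≤ x + y`, the right-hand side is at most
`((x + y) / 2) ^ r * (x ^ 2 + y ^ 2 - 2 t)`, and the left-hand side is
`x ^ r * x ^ 2 + y ^ r * y ^ 2 - (x ^ r + y ^ r) t`. Both are affine in `t ∈ [-x y, x y]`, so it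
suffices to compare them at the endpoints: at `t = x y` this is the monotonicity of `s ↦ s ^ r`,
at `t = -x y` the midpoint convexity of `s ↦ s ^ (r + 1)`.
-/

open RealInnerProductSpace

namespace Real

variable {r x y : ℝ}

lemma rpow_midpoint_mul_sq_sub_le (hr : 0 ≤ r) (hx : 0 ≤ x) (hy : 0 ≤ y) :
    ((x + y) / 2) ^ r * (x - y) ^ 2 ≤ (x ^ r * x - y ^ r * y) * (x - y) := by
  wlog hyx : y ≤ x generalizing x y
  · convert this hy hx (le_of_not_ge hyx) using 1 <;> ring_nf
  have hmid : ((x + y) / 2) ^ r ≤ x ^ r := rpow_le_rpow (by positivity) (by linarith) hr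
  have hyr : y ^ r ≤ x ^ r := rpow_le_rpow hy hyx hr
  calc ((x + y) / 2) ^ r * (x - y) ^ 2 ≤ x ^ r * (x - y) ^ 2 := by gcongr
    _ = (x ^ r * x - x ^ r * y) * (x - y) := by ring
    _ ≤ (x ^ r * x - y ^ r * y) * (x - y) := by
      gcongr ((x ^ r * x - ?_) * (x - y))
      exact mul_le_mul_of_nonneg_right hyr hy

lemma rpow_midpoint_mul_sq_add_le (hr : 0 ≤ r) (hx : 0 ≤ x) (hy : 0 ≤ y) :
    ((x + y) / 2) ^ r * (x + y) ^ 2 ≤ (x ^ r * x + y ^ r * y) * (x + y) := by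
  have hconv := (convexOn_rpow (by linarith : (1 : ℝ) ≤ r + 1)).2 (Set.mem_Ici.2 hx)
    (Set.mem_Ici.2 hy) (by norm_num : (0 : ℝ) ≤ 1 / 2) (by norm_num : (0 : ℝ) ≤ 1 / 2)
    (by norm_num)
  simp only [smul_eq_mul] at hconv
  have hr1 : r + 1 ≠ 0 := by positivity
  rw [show 1 / 2 * x + 1 / 2 * y = (x + y) / 2 by ring, rpow_add_one' (by positivity) hr1,
    rpow_add_one' hx hr1, rpow_add_one' hy hr1] at hconv
  have hmid : ((x + y) / 2) ^ r * ((x + y) / 2) ≤ (x ^ r * x + y ^ r * y) / 2 := by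
    linarith
  calc ((x + y) / 2) ^ r * (x + y) ^ 2 = 2 * (((x + y) / 2) ^ r * ((x + y) / 2)) * (x + y) := by
        ring
    _ ≤ 2 * ((x ^ r * x + y ^ r * y) / 2) * (x + y) := by gcongr
    _ = (x ^ r * x + y ^ r * y) * (x + y) := by ring

lemma rpow_midpoint_mul_le_of_abs_le {t : ℝ} (hr : 0 ≤ r) (hx : 0 ≤ x) (hy : 0 ≤ y)
    (ht : |t| ≤ x * y) :
    ((x + y) / 2) ^ r * (x ^ 2 + y ^ 2 - 2 * t) ≤
      x ^ r * x ^ 2 + y ^ r * y ^ 2 - (x ^ r + y ^ r) * t := by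
  have hsub := rpow_midpoint_mul_sq_sub_le hr hx hy
  have hadd := rpow_midpoint_mul_sq_add_le hr hx hy
  obtain ⟨hlo, hhi⟩ := abs_le.1 ht
  -- the difference of the two sides is affine in `t`, with slope `2 c - x ^ r - y ^ r`
  set c := ((x + y) / 2) ^ r
  rcases le_total (x ^ r + y ^ r) (2 * c) with hslope | hslope
  · nlinarith [mul_nonneg (by linarith : 0 ≤ t + x * y)
      (by linarith : 0 ≤ 2 * c - (x ^ r + y ^ r))]
  · nlinarith [mul_nonneg (by linarith : 0 ≤ x * y - t)
      (by linarith : 0 ≤ x ^ r + y ^ r - 2 * c)]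

end Real

lemma two_rpow_neg_mul_norm_sub_rpow_le {E : Type*} [SeminormedAddCommGroup E] {r : ℝ}
    (hr : 0 ≤ r) (a b : E) :
    (2 : ℝ) ^ (-r) * ‖a - b‖ ^ (r + 2) ≤ ((‖a‖ + ‖b‖) / 2) ^ r * ‖a - b‖ ^ 2 := by
  have hn : 0 ≤ ‖a - b‖ := norm_nonneg _
  calc (2 : ℝ) ^ (-r) * ‖a - b‖ ^ (r + 2) = (‖a - b‖ / 2) ^ r * ‖a - b‖ ^ 2 := by
        rw [Real.rpow_add' hn (by positivity), Real.rpow_two, Real.div_rpow hn zero_le_two,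
          Real.rpow_neg zero_le_two]
        ring
    _ ≤ ((‖a‖ + ‖b‖) / 2) ^ r * ‖a - b‖ ^ 2 := by
      gcongr
      exact norm_sub_le a b

lemma real_inner_smul_sub_smul_sub {E : Type*} [NormedAddCommGroup E] [InnerProductSpace ℝ E]
    (α β : ℝ) (a b : E) :
    ⟪α • a - β • b, a - b⟫ = α * ‖a‖ ^ 2 + β * ‖b‖ ^ 2 - (α + β) * ⟪a, b⟫ := by
  simp only [inner_sub_left, inner_sub_right, real_inner_smul_left, real_inner_self_eq_norm_sq,
    real_inner_comm a b]
  ring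

theorem stmt_0 {E : Type*} [NormedAddCommGroup E] [InnerProductSpace ℝ E]
    (r : ℝ) (hr : 0 ≤ r) (a b : E) :
    ⟪(‖a‖ ^ r) • a - (‖b‖ ^ r) • b, a - b⟫ ≥ (2 : ℝ) ^ (-r) * ‖a - b‖ ^ (r + 2) := by
  rw [ge_iff_le, real_inner_smul_sub_smul_sub]
  calc (2 : ℝ) ^ (-r) * ‖a - b‖ ^ (r + 2) ≤ ((‖a‖ + ‖b‖) / 2) ^ r * ‖a - b‖ ^ 2 :=
        two_rpow_neg_mul_norm_sub_rpow_le hr a b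
    _ = ((‖a‖ + ‖b‖) / 2) ^ r * (‖a‖ ^ 2 + ‖b‖ ^ 2 - 2 * ⟪a, b⟫) := by rw [norm_sub_sq_real]; ring
    _ ≤ _ := Real.rpow_midpoint_mul_le_of_abs_le hr (norm_nonneg a) (norm_nonneg b)
          (abs_real_inner_le_norm a b)
end

section
/- For any real number r ≥ 0 and any elements a, b of a real inner product space E, one has ⟨‖a‖^r • a - ‖b‖^r • b, a - b⟩ ≥ (1/2) * (‖a‖^r + ‖b‖^r) * ‖a - b‖^2. -/
/-!
Expanding both sides, `⟪α • a - β • b, a - b⟫` exceeds `(α + β) / 2 * ‖a - b‖ ^ 2` by exactly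
`(α - β) * (‖a‖ - ‖b‖) * (‖a‖ + ‖b‖) / 2`. With `α = ‖a‖ ^ r` and `β = ‖b‖ ^ r` this is
nonnegative because `t ↦ t ^ r` is monotone on `[0, ∞)`.
-/

open RealInnerProductSpace

theorem MonotoneOn.sub_mul_sub_nonneg {s : Set ℝ} {f : ℝ → ℝ} (hf : MonotoneOn f s)
    {x y : ℝ} (hx : x ∈ s) (hy : y ∈ s) : 0 ≤ (f x - f y) * (x - y) := by
  rcases le_total x y with hxy | hyx
  · exact mul_nonneg_of_nonpos_of_nonpos (sub_nonpos.2 (hf hx hy hxy)) (sub_nonpos.2 hxy)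
  · exact mul_nonneg (sub_nonneg.2 (hf hy hx hyx)) (sub_nonneg.2 hyx)

section InnerProductSpace

variable {E : Type*} [NormedAddCommGroup E] [InnerProductSpace ℝ E]

theorem real_inner_smul_sub_smul_sub_eq (α β : ℝ) (a b : E) :
    ⟪α • a - β • b, a - b⟫ =
      (α + β) / 2 * ‖a - b‖ ^ 2 + (α - β) * (‖a‖ - ‖b‖) * (‖a‖ + ‖b‖) / 2 := by
  rw [norm_sub_sq_real, inner_sub_left, inner_sub_right, inner_sub_right, real_inner_smul_left,
    real_inner_smul_left, real_inner_smul_left, real_inner_smul_left, real_inner_self_eq_norm_sq,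
    real_inner_self_eq_norm_sq, real_inner_comm b a]
  ring

theorem half_add_mul_norm_sub_sq_le_real_inner {α β : ℝ} {a b : E}
    (h : 0 ≤ (α - β) * (‖a‖ - ‖b‖)) :
    (α + β) / 2 * ‖a - b‖ ^ 2 ≤ ⟪α • a - β • b, a - b⟫ := by
  rw [real_inner_smul_sub_smul_sub_eq]
  have : 0 ≤ (α - β) * (‖a‖ - ‖b‖) * (‖a‖ + ‖b‖) :=
    mul_nonneg h (add_nonneg (norm_nonneg a) (norm_nonneg b))
  linarith

end InnerProductSpace

theorem stmt_1 {E : Type*} [NormedAddCommGroup E] [InnerProductSpace ℝ E]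
    (r : ℝ) (hr : 0 ≤ r) (a b : E) :
    ⟪(‖a‖ ^ r) • a - (‖b‖ ^ r) • b, a - b⟫ ≥
      (1 / 2) * (‖a‖ ^ r + ‖b‖ ^ r) * ‖a - b‖ ^ 2 := by
  have hmono : 0 ≤ (‖a‖ ^ r - ‖b‖ ^ r) * (‖a‖ - ‖b‖) :=
    (Real.monotoneOn_rpow_Ici_of_exponent_nonneg hr).sub_mul_sub_nonneg
      (norm_nonneg a) (norm_nonneg b)
  calc (1 / 2) * (‖a‖ ^ r + ‖b‖ ^ r) * ‖a - b‖ ^ 2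
      = (‖a‖ ^ r + ‖b‖ ^ r) / 2 * ‖a - b‖ ^ 2 := by ring
    _ ≤ _ := half_add_mul_norm_sub_sq_le_real_inner hmono
end

section
/- For any vectors a, b in a real inner product space E and any r ≥ 1, one has ‖ ‖a‖^(r-1) • a - ‖b‖^(r-1) • b ‖ ≤ r * ‖a - b‖ * (‖a‖^(r-1) + ‖b‖^(r-1)). -/
open Real

lemma key_rpow_ineq {s x y : ℝ} (hs : 0 ≤ s) (hy : 0 ≤ y) (hxy : y ≤ x) :
    y * (x ^ s - y ^ s) ≤ s * (x - y) * (x ^ s + y ^ s) := by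
  rcases eq_or_lt_of_le hy with rfl | hy'
  · simp only [zero_mul]
    exact mul_nonneg (mul_nonneg hs (by linarith))
      (add_nonneg (Real.rpow_nonneg hxy s) (Real.rpow_nonneg le_rfl s))
  have hx : 0 < x := lt_of_lt_of_le hy' hxy
  have hxs : 0 < x ^ s := Real.rpow_pos_of_pos hx s
  have hys : 0 < y ^ s := Real.rpow_pos_of_pos hy' s
  rcases le_or_gt 1 s with hs1 | hs1
  · -- use Bernoulli with base y/x ≤ 1
    have hu : -1 ≤ y / x - 1 := by
      have : 0 ≤ y / x := div_nonneg hy hx.le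
      linarith
    have hb := one_add_mul_self_le_rpow_one_add hu hs1
    rw [add_sub_cancel] at hb
    have hdr : (y / x) ^ s = y ^ s / x ^ s := Real.div_rpow hy hx.le s
    rw [hdr] at hb
    have hb' : (1 + s * (y / x - 1)) * x ^ s ≤ y ^ s := (le_div_iff₀ hxs).mp hb
    have hq : y / x * x = y := div_mul_cancel₀ y hx.ne'
    have hd1 : y / x ≤ 1 := (div_le_one hx).mpr hxy
    have hd0 : 0 ≤ y / x := div_nonneg hy hx.le
    -- x^s - y^s ≤ s * (1 - y/x) * x^s ; multiply by y ≤ x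
    have h2 : y * (x ^ s - y ^ s) ≤ y * (s * (1 - y / x) * x ^ s) := by nlinarith
    have h3 : y * (s * (1 - y / x) * x ^ s) ≤ x * (s * (1 - y / x) * x ^ s) := by
      apply mul_le_mul_of_nonneg_right hxy
      have : 0 ≤ 1 - y / x := by linarith
      positivity
    have h4 : x * (s * (1 - y / x) * x ^ s) = s * (x - y) * x ^ s := by
      field_simp
    nlinarith [mul_nonneg (mul_nonneg hs (by linarith : (0:ℝ) ≤ x - y)) hys.le]
  · -- use Bernoulli with base x/y ≥ 1
    have hu : -1 ≤ x / y - 1 := by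
      have : 0 ≤ x / y := div_nonneg hx.le hy
      linarith
    have hb := rpow_one_add_le_one_add_mul_self hu hs hs1.le
    rw [add_sub_cancel] at hb
    rw [Real.div_rpow hx.le hy s] at hb
    have hb' : x ^ s ≤ (1 + s * (x / y - 1)) * y ^ s := (div_le_iff₀ hys).mp hb
    have hq : x / y * y = x := div_mul_cancel₀ x hy'.ne'
    -- x^s - y^s ≤ s * (x/y - 1) * y^s ; multiply by y
    have h2 : y * (x ^ s - y ^ s) ≤ y * (s * (x / y - 1) * y ^ s) := by nlinarith
    have h4 : y * (s * (x / y - 1) * y ^ s) = s * (x - y) * y ^ s := by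
      field_simp
    nlinarith [mul_nonneg (mul_nonneg hs (by linarith : (0:ℝ) ≤ x - y)) hxs.le]

lemma aux_main {E : Type*} [NormedAddCommGroup E] [InnerProductSpace ℝ E]
    (r : ℝ) (hr : 1 ≤ r) (a b : E) (hab : ‖b‖ ≤ ‖a‖) :
    ‖(‖a‖ ^ (r - 1)) • a - (‖b‖ ^ (r - 1)) • b‖ ≤
      r * ‖a - b‖ * (‖a‖ ^ (r - 1) + ‖b‖ ^ (r - 1)) := by
  set s := r - 1 with hsdef
  have hs : 0 ≤ s := by simp [hsdef]; linarith
  set x := ‖a‖ ^ s with hxd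
  set y := ‖b‖ ^ s with hyd
  have hx0 : 0 ≤ x := Real.rpow_nonneg (norm_nonneg a) s
  have hy0 : 0 ≤ y := Real.rpow_nonneg (norm_nonneg b) s
  have hyx : y ≤ x := Real.rpow_le_rpow (norm_nonneg b) hab hs
  have hkey := key_rpow_ineq hs (norm_nonneg b) hab
  have hnd : ‖a‖ - ‖b‖ ≤ ‖a - b‖ := norm_sub_norm_le a b
  have hdec : (x • a - y • b) = x • (a - b) + (x - y) • b := by
    rw [smul_sub, sub_smul]; abel
  have hsum : 0 ≤ x + y := by linarith
  calc ‖x • a - y • b‖ = ‖x • (a - b) + (x - y) • b‖ := by rw [hdec]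
    _ ≤ ‖x • (a - b)‖ + ‖(x - y) • b‖ := norm_add_le _ _
    _ = x * ‖a - b‖ + (x - y) * ‖b‖ := by
        rw [norm_smul, norm_smul, Real.norm_of_nonneg hx0,
          Real.norm_of_nonneg (by linarith : (0:ℝ) ≤ x - y)]
    _ ≤ r * ‖a - b‖ * (x + y) := by
        have h1 : (x - y) * ‖b‖ ≤ s * (‖a‖ - ‖b‖) * (x + y) := by
          rw [mul_comm]; exact hkey
        have h2 : s * (‖a‖ - ‖b‖) * (x + y) ≤ s * ‖a - b‖ * (x + y) := by
          apply mul_le_mul_of_nonneg_right _ hsum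
          exact mul_le_mul_of_nonneg_left hnd hs
        have h3 : x * ‖a - b‖ ≤ (x + y) * ‖a - b‖ := by
          apply mul_le_mul_of_nonneg_right _ (norm_nonneg _); linarith
        have hrs : r = 1 + s := by simp [hsdef]
        rw [hrs]
        nlinarith [h1, h2, h3, norm_nonneg (a - b)]

theorem stmt_2 {E : Type*} [NormedAddCommGroup E] [InnerProductSpace ℝ E]
    (r : ℝ) (hr : 1 ≤ r) (a b : E) :
    ‖(‖a‖ ^ (r - 1)) • a - (‖b‖ ^ (r - 1)) • b‖ ≤
      r * ‖a - b‖ * (‖a‖ ^ (r - 1) + ‖b‖ ^ (r - 1)) := by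
  rcases le_total ‖b‖ ‖a‖ with h | h
  · exact aux_main r hr a b h
  · have := aux_main r hr b a h
    rw [norm_sub_rev, norm_sub_rev b a, add_comm (‖b‖ ^ (r-1))] at this
    exact this
end
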